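/- The infinite binary word w = 01 0 0101 0 (01)⁴ 0 (01)⁸ 0 … 0 (01)^{2^n} 0 … has letter frequencies ρ₀ = ρ₁ = 1/2 (the limits of |pref_n(w)|₀/n and |pref_n(w)|₁/n both equal 1/2), but w is not weakly abelian periodic. -/

import Mathlib

open Filter Topology

/-- Number of 1's (`true`) in the length-`n` prefix of the infinite binary word `w`. -/
def ones (w : ℕ → Bool) (n : ℕ) : ℕ :=
  ((Finset.range n).filter (fun i => w i = true)).card

/-- Number of 0's (`false`) in the length-`n` prefix of `w`. -/
def zeros (w : ℕ → Bool) (n : ℕ) : ℕ := n - ones w n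

/-- The graphic of `w`: `g_w(n) = |pref_n(w)|₁ - |pref_n(w)|₀`. -/
def graphic (w : ℕ → Bool) (n : ℕ) : ℤ := (ones w n : ℤ) - (zeros w n : ℤ)

/-- `w` is weakly abelian periodic with frequency `ρ` of the letter 1 in the blocks:
there is a factorization `w = v₀v₁v₂⋯` (cut points `k 0 < k 1 < ⋯`, with `v₀` the
prefix of length `k 0`) such that each block `vᵢ = w[k i, k (i+1))`, `i ≥ 1`,
has frequency `ρ` of the letter 1. -/
def WAPwith (w : ℕ → Bool) (ρ : ℚ) : Prop :=
  ∃ k : ℕ → ℕ, StrictMono k ∧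
    ∀ i : ℕ, ((ones w (k (i+1)) : ℚ) - (ones w (k i) : ℚ))
      = ρ * ((k (i+1) : ℚ) - (k i : ℚ))

/-- `w` is weakly abelian periodic. -/
def WAP (w : ℕ → Bool) : Prop := ∃ ρ : ℚ, WAPwith w ρ

/-- `w` is bounded weakly abelian periodic: WAP with blocks of uniformly bounded length. -/
def BoundedWAP (w : ℕ → Bool) : Prop :=
  ∃ (ρ : ℚ) (k : ℕ → ℕ) (C : ℕ), StrictMono k ∧ (∀ i, k (i+1) - k i ≤ C) ∧
    ∀ i : ℕ, ((ones w (k (i+1)) : ℚ) - (ones w (k i) : ℚ))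
      = ρ * ((k (i+1) : ℚ) - (k i : ℚ))

/-- `w` has bounded width: its graphic lies between two parallel lines with
rational coefficients. -/
def BoundedWidth (w : ℕ → Bool) : Prop :=
  ∃ a b₁ b₂ : ℚ, ∀ n : ℕ,
    a * n + b₁ ≤ (graphic w n : ℚ) ∧ (graphic w n : ℚ) ≤ a * n + b₂

/-- The `n`-th block `(01)^{2^n} 0` of the word
`w = 01 0 0101 0 (01)⁴ 0 ⋯ (01)^{2^n} 0 ⋯`. -/
def padBlock (n : ℕ) : List Bool :=
  (List.replicate (2 ^ n) [false, true]).flatten ++ [false]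

/-!
Write `g(N) = |pref_N w|₁ - |pref_N w|₀`. Inside the block `(01)^{2^n} 0` the value of `g` oscillates
between `-n` and `-(n+1)`, and the block starts after about `2^{n+1}` letters, so `g(N)² ≤ N + 2`
and both frequencies are `1/2`; at the same time `g(N) → -∞`.
A factorization into blocks of common frequency `ρ` must then have `ρ = 1/2`, so `g` takes the same
value at all (arbitrarily large) cut points, which contradicts `g(N) → -∞`.
-/

section Graphic

variable (w : ℕ → Bool)

lemma ones_le (n : ℕ) : ones w n ≤ n := by
  simpa [ones] using Finset.card_filter_le (Finset.range n) _

lemma graphic_eq (n : ℕ) : graphic w n = 2 * ones w n - n := by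
  rw [graphic, zeros, Nat.cast_sub (ones_le w n)]
  ring

lemma ones_succ (n : ℕ) : ones w (n + 1) = ones w n + if w n then 1 else 0 := by
  unfold ones
  rw [Finset.range_add_one, Finset.filter_insert]
  by_cases h : w n <;> simp [h]

lemma graphic_succ (n : ℕ) : graphic w (n + 1) = graphic w n + if w n then 1 else -1 := by
  rw [graphic_eq, graphic_eq, ones_succ]
  by_cases h : w n <;> simp [h] <;> ring

lemma tendsto_ones_div_of_tendsto_graphic_div {a : ℝ}
    (h : Tendsto (fun n => (graphic w n : ℝ) / n) atTop (𝓝 a)) :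
    Tendsto (fun n => (ones w n : ℝ) / n) atTop (𝓝 ((1 + a) / 2)) := by
  refine ((tendsto_const_nhds.add h).div_const 2).congr' ?_
  filter_upwards [eventually_ge_atTop 1] with n hn
  have hn : (n : ℝ) ≠ 0 := by positivity
  rw [graphic_eq]
  push_cast
  field_simp
  ring

lemma tendsto_zeros_div_of_tendsto_graphic_div {a : ℝ}
    (h : Tendsto (fun n => (graphic w n : ℝ) / n) atTop (𝓝 a)) :
    Tendsto (fun n => (zeros w n : ℝ) / n) atTop (𝓝 ((1 - a) / 2)) := by
  refine ((tendsto_const_nhds.sub h).div_const 2).congr' ?_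
  filter_upwards [eventually_ge_atTop 1] with n hn
  have hn : (n : ℝ) ≠ 0 := by positivity
  rw [graphic_eq, zeros, Nat.cast_sub (ones_le w n)]
  push_cast
  field_simp
  ring

end Graphic

lemma tendsto_div_natCast_of_sq_le (f : ℕ → ℝ) (C : ℝ) (h : ∀ n, f n ^ 2 ≤ n + C) :
    Tendsto (fun n => f n / n) atTop (𝓝 0) := by
  have hsq : Tendsto (fun n : ℕ => (f n / n) ^ 2) atTop (𝓝 0) := by
    have hbound : Tendsto (fun n : ℕ => 1 / (n : ℝ) + C / n ^ 2) atTop (𝓝 0) := by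
      simpa using (tendsto_one_div_atTop_nhds_zero_nat (𝕜 := ℝ)).add
        ((tendsto_const_nhds (x := C)).div_atTop
          ((tendsto_pow_atTop two_ne_zero).comp tendsto_natCast_atTop_atTop))
    refine squeeze_zero' (Eventually.of_forall fun n => sq_nonneg _) ?_ hbound
    filter_upwards [eventually_ge_atTop 1] with n hn
    have hn : (0 : ℝ) < n := by positivity
    calc (f n / n) ^ 2 = f n ^ 2 / n ^ 2 := div_pow _ _ _
      _ ≤ (n + C) / n ^ 2 := by gcongr; exact h n
      _ = 1 / n + C / n ^ 2 := by field_simp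
  rw [tendsto_zero_iff_abs_tendsto_zero]
  simpa [Function.comp_def, Real.sqrt_sq_eq_abs] using (Real.continuous_sqrt.tendsto 0).comp hsq

namespace WAPwith

variable {w : ℕ → Bool} {ρ : ℚ} {k : ℕ → ℕ}

lemma ones_sub_mul_eq
    (hk : ∀ i, ((ones w (k (i + 1)) : ℚ) - ones w (k i)) = ρ * ((k (i + 1) : ℚ) - k i)) (i : ℕ) :
    (ones w (k i) : ℚ) - ρ * k i = ones w (k 0) - ρ * k 0 := by
  induction i with
  | zero => rfl
  | succ i ih => linear_combination ih + hk i

lemma rho_eq_of_tendsto {α : ℝ} (hw : WAPwith w ρ)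
    (hα : Tendsto (fun n => (ones w n : ℝ) / n) atTop (𝓝 α)) : (ρ : ℝ) = α := by
  obtain ⟨k, hmono, hk⟩ := hw
  have hk_top : Tendsto (fun i => (k i : ℝ)) atTop atTop :=
    tendsto_natCast_atTop_atTop.comp hmono.tendsto_atTop
  have hρ : Tendsto (fun i => (ones w (k i) : ℝ) / k i) atTop (𝓝 ρ) := by
    have := (tendsto_const_nhds (x := (ρ : ℝ))).add
      ((tendsto_const_nhds (x := (ones w (k 0) - ρ * k 0 : ℝ))).div_atTop hk_top)
    rw [add_zero] at this
    refine this.congr' ?_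
    filter_upwards [hk_top.eventually_gt_atTop 0] with i hi
    have hq : (ones w (k i) : ℝ) = ones w (k 0) - ρ * k 0 + ρ * k i := by
      exact_mod_cast (by linear_combination ones_sub_mul_eq hk i)
    rw [hq]
    field_simp
    ring
  exact tendsto_nhds_unique hρ (hα.comp hmono.tendsto_atTop)

end WAPwith

lemma not_WAP_of_tendsto_graphic_atBot {w : ℕ → Bool}
    (hfreq : Tendsto (fun n => (ones w n : ℝ) / n) atTop (𝓝 (1 / 2)))
    (hbot : Tendsto (graphic w) atTop atBot) : ¬ WAP w := by
  rintro ⟨ρ, hρw⟩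
  have hρ : ρ = 1 / 2 := by
    have h := hρw.rho_eq_of_tendsto hfreq
    rw [show (1 / 2 : ℝ) = ((1 / 2 : ℚ) : ℝ) by norm_num] at h
    exact_mod_cast h
  obtain ⟨k, hmono, hk⟩ := hρw
  have hconst : ∀ i, graphic w (k i) = graphic w (k 0) := by
    intro i
    have := WAPwith.ones_sub_mul_eq hk i
    rw [hρ] at this
    have hq : ((2 * ones w (k i) - k i : ℤ) : ℚ) = ((2 * ones w (k 0) - k 0 : ℤ) : ℚ) := by
      push_cast
      linear_combination 2 * this
    rw [graphic_eq, graphic_eq]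
    exact_mod_cast hq
  exact not_tendsto_const_atBot (graphic w (k 0)) atTop
    ((hbot.comp hmono.tendsto_atTop).congr hconst)

lemma getD_flatten_replicate_false_true (k l : ℕ) (hl : l < 2 * k) :
    (List.replicate k [false, true]).flatten.getD l false = decide (l % 2 = 1) := by
  induction k generalizing l with
  | zero => omega
  | succ k ih =>
    rw [List.replicate_succ, List.flatten_cons]
    match l with
    | 0 => rfl
    | 1 => rfl
    | l + 2 => simpa [Nat.add_mod_right] using ih l (by omega)

lemma padBlock_getD {n l : ℕ} (hl : l < 2 ^ (n + 1) + 1) :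
    (padBlock n).getD l false = decide (l % 2 = 1) := by
  have hlen : (List.replicate (2 ^ n) [false, true]).flatten.length = 2 * 2 ^ n := by
    simp [List.length_flatten, Nat.mul_comm]
  rcases Nat.lt_or_ge l (2 * 2 ^ n) with h | h
  · rw [padBlock, List.getD_append _ _ _ _ (by omega), getD_flatten_replicate_false_true _ _ h]
  · obtain rfl : l = 2 * 2 ^ n := by rw [pow_succ] at hl; omega
    rw [padBlock, List.getD_eq_getElem?_getD, List.getElem?_append_right (by omega), hlen]
    simp

lemma sq_add_one_le_two_pow_add (k : ℕ) : k ^ 2 + 1 ≤ 2 ^ k + k := by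
  induction k with
  | zero => simp
  | succ k ih =>
    have h2k : 2 * k ≤ 2 ^ k := by
      rcases k with _ | k
      · simp
      · rw [pow_succ]; have := @Nat.lt_two_pow_self k; omega
    rw [pow_succ 2 k]
    nlinarith

def blockStart (n : ℕ) : ℕ := 2 ^ (n + 1) - 2 + n

lemma blockStart_succ (n : ℕ) : blockStart (n + 1) = blockStart n + (2 ^ (n + 1) + 1) := by
  have : 2 ≤ 2 ^ (n + 1) := Nat.le_self_pow (Nat.succ_ne_zero n) 2
  rw [blockStart, blockStart, pow_succ 2 (n + 1)]
  omega

lemma blockStart_mono : Monotone blockStart :=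
  monotone_nat_of_le_succ fun n => blockStart_succ n ▸ Nat.le_add_right _ _

lemma exists_eq_blockStart_add (N : ℕ) : ∃ n l, l ≤ 2 ^ (n + 1) ∧ N = blockStart n + l := by
  induction N with
  | zero => exact ⟨0, 0, by omega, rfl⟩
  | succ N ih =>
    obtain ⟨n, l, hl, rfl⟩ := ih
    rcases Nat.lt_or_ge l (2 ^ (n + 1)) with h | h
    · exact ⟨n, l + 1, by omega, by omega⟩
    · exact ⟨n + 1, 0, by omega, by rw [blockStart_succ]; omega⟩

def IsPadBlockWord (w : ℕ → Bool) : Prop :=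
  ∀ n l, l < 2 ^ (n + 1) + 1 → w (blockStart n + l) = (padBlock n).getD l false

namespace IsPadBlockWord

variable {w : ℕ → Bool}

lemma apply_blockStart_add (hw : IsPadBlockWord w) {n l : ℕ} (hl : l < 2 ^ (n + 1) + 1) :
    w (blockStart n + l) = decide (l % 2 = 1) := by
  rw [hw n l hl, padBlock_getD hl]

lemma graphic_blockStart_add_of_graphic_blockStart (hw : IsPadBlockWord w) {n : ℕ}
    (h₀ : graphic w (blockStart n) = -n) {l : ℕ} (hl : l ≤ 2 ^ (n + 1) + 1) :
    graphic w (blockStart n + l) = -((n + l % 2 : ℕ) : ℤ) := by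
  induction l with
  | zero => simpa using h₀
  | succ l ih =>
    rw [← add_assoc, graphic_succ, ih (by omega), hw.apply_blockStart_add (by omega)]
    rcases Nat.mod_two_eq_zero_or_one l with h | h
    · simp [h, show (l + 1) % 2 = 1 by omega]
      ring
    · simp [h, show (l + 1) % 2 = 0 by omega]

lemma graphic_blockStart (hw : IsPadBlockWord w) (n : ℕ) : graphic w (blockStart n) = -n := by
  induction n with
  | zero => simp [graphic, zeros, ones, blockStart]
  | succ n ih =>
    rw [blockStart_succ, hw.graphic_blockStart_add_of_graphic_blockStart ih le_rfl,
      show (2 ^ (n + 1) + 1) % 2 = 1 by rw [pow_succ]; omega]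

lemma exists_graphic_eq (hw : IsPadBlockWord w) (N : ℕ) :
    ∃ n l, l ≤ 2 ^ (n + 1) ∧ N = blockStart n + l ∧ graphic w N = -((n + l % 2 : ℕ) : ℤ) := by
  obtain ⟨n, l, hl, rfl⟩ := exists_eq_blockStart_add N
  exact ⟨n, l, hl, rfl,
    hw.graphic_blockStart_add_of_graphic_blockStart (hw.graphic_blockStart n) (by omega)⟩

lemma graphic_sq_le (hw : IsPadBlockWord w) (N : ℕ) : graphic w N ^ 2 ≤ N + 2 := by
  obtain ⟨n, l, -, rfl, hN⟩ := hw.exists_graphic_eq N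
  have hpow : (n + 1) ^ 2 + 1 ≤ 2 ^ (n + 1) + (n + 1) := sq_add_one_le_two_pow_add (n + 1)
  have hsq : (n + l % 2) ^ 2 ≤ (n + 1) ^ 2 := by gcongr; omega
  have h2 : 2 ≤ 2 ^ (n + 1) := Nat.le_self_pow (Nat.succ_ne_zero n) 2
  rw [hN, neg_sq]
  exact_mod_cast (show (n + l % 2) ^ 2 ≤ blockStart n + l + 2 by rw [blockStart]; omega)

lemma tendsto_graphic_atBot (hw : IsPadBlockWord w) : Tendsto (graphic w) atTop atBot := by
  refine tendsto_atBot.2 fun b => ?_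
  filter_upwards [eventually_ge_atTop (blockStart b.natAbs)] with N hN
  obtain ⟨n, l, hl, rfl, hN'⟩ := hw.exists_graphic_eq N
  have : b.natAbs ≤ n := by
    by_contra! h
    have := blockStart_mono (Nat.succ_le_of_lt h)
    rw [blockStart_succ] at this
    omega
  rw [hN']
  omega

end IsPadBlockWord

/-- The word `w = 01 0 0101 0 (01)⁴ 0 ⋯ (01)^{2^n} 0 ⋯` (block `n` starts at
position `2^{n+1} - 2 + n`) has letter frequencies `ρ₀ = ρ₁ = 1/2`, but is not
weakly abelian periodic. -/
theorem frequencies_half_not_WAP (w : ℕ → Bool)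
    (hw : ∀ n l : ℕ, l < 2 ^ (n + 1) + 1 →
      w (2 ^ (n + 1) - 2 + n + l) = (padBlock n).getD l false) :
    Tendsto (fun n => (zeros w n : ℝ) / n) atTop (𝓝 (1 / 2)) ∧
    Tendsto (fun n => (ones w n : ℝ) / n) atTop (𝓝 (1 / 2)) ∧
    ¬ WAP w := by
  have hpad : IsPadBlockWord w := hw
  have hgraphic : Tendsto (fun n => (graphic w n : ℝ) / n) atTop (𝓝 0) :=
    tendsto_div_natCast_of_sq_le _ 2 fun n => by exact_mod_cast hpad.graphic_sq_le n
  have hones : Tendsto (fun n => (ones w n : ℝ) / n) atTop (𝓝 (1 / 2)) := by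
    simpa using tendsto_ones_div_of_tendsto_graphic_div w hgraphic
  refine ⟨by simpa using tendsto_zeros_div_of_tendsto_graphic_div w hgraphic, hones, ?_⟩
  exact not_WAP_of_tendsto_graphic_atBot hones hpad.tendsto_graphic_atBot
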